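/- arXiv:2209.09621 — 4 statements merged into one kernel-verified Lean document; each statement's English description precedes it below -/
import Mathlib

section
/- Let R = {R₁,…,Rₙ} be points in ℝ² ordered by first coordinate, and for a k-subset C_k = {R_{i₁},…,R_{i_k}} (i₁ < ⋯ < i_k) define the t-monotone matching cost φ(R, C_k) as the sum over points of R of the l₁-distance to their assigned point of C_k, where each Rᵢ is assigned to the element of C_k whose time coordinate is nearest (tie broken by l₁-distance, then to the left). If C_k* is an optimal k-subset (minimizing φ(R, C_k)), then for every 1 ≤ j ≤ k, the j-prefix {R_{i₁},…,R_{iⱼ}} of C_k* is left optimal: among all j-subsets whose last element is R_{iⱼ}, it minimizes the matching cost restricted to the points of R with time coordinate at most that of R_{iⱼ}. -/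
/-- l₁ (Manhattan) distance in the plane. -/
noncomputable def d1 (p q : ℝ × ℝ) : ℝ := |p.1 - q.1| + |p.2 - q.2|

/-- Cost of the point `R i` in the t-monotone matching with the selected set `C`:
the l₁-distance from `R i` to its assigned point, which is a point of `C` whose time
coordinate is nearest to that of `R i` (ties broken by l₁-distance, then to the left;
the tie-breaking does not affect the cost, which is the minimum l₁-distance among
the time-nearest points). -/
noncomputable def tCost (R : ℕ → ℝ × ℝ) (C : Finset ℕ) (i : ℕ) : ℝ :=
  sInf ((fun j => d1 (R i) (R j)) ''
    {j | j ∈ C ∧ ∀ j' ∈ C, |(R i).1 - (R j).1| ≤ |(R i).1 - (R j').1|})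

/-- Total t-monotone matching cost between the points `R 1, …, R n` and the set `C`. -/
noncomputable def totalCost (R : ℕ → ℝ × ℝ) (n : ℕ) (C : Finset ℕ) : ℝ :=
  ∑ i ∈ Finset.Icc 1 n, tCost R C i

/-- Left partial evaluation: the matching cost restricted to the points of `R`
whose time coordinate is at most that of the last element of `C`. -/
noncomputable def leftCost (R : ℕ → ℝ × ℝ) (n : ℕ) (C : Finset ℕ) : ℝ :=
  ∑ i ∈ (Finset.Icc 1 n).filter (fun i => (R i).1 ≤ (R (C.sup id)).1), tCost R C i

/-- `C` is left optimal: among all subsets of the same cardinality with the same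
last element, it minimizes the left partial evaluation. -/
def LeftOptimal (R : ℕ → ℝ × ℝ) (n : ℕ) (C : Finset ℕ) : Prop :=
  ∀ D : Finset ℕ, D ⊆ Finset.Icc 1 n → D.card = C.card → D.sup id = C.sup id →
    leftCost R n C ≤ leftCost R n D

/-- The set of time-nearest points of `C` to `R i`. -/
def Sel (R : ℕ → ℝ × ℝ) (C : Finset ℕ) (i : ℕ) : Set ℕ :=
  {j | j ∈ C ∧ ∀ j' ∈ C, |(R i).1 - (R j).1| ≤ |(R i).1 - (R j').1|}

lemma tCost_congr (R : ℕ → ℝ × ℝ) (C C' : Finset ℕ) (i : ℕ)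
    (h : Sel R C i = Sel R C' i) : tCost R C i = tCost R C' i := by
  show sInf ((fun j => d1 (R i) (R j)) '' Sel R C i)
    = sInf ((fun j => d1 (R i) (R j)) '' Sel R C' i)
  rw [h]

lemma sel_union_left (R : ℕ → ℝ × ℝ) (A B : Finset ℕ) (m i : ℕ)
    (hmA : m ∈ A) (hA : ∀ a ∈ A, (R a).1 ≤ (R m).1)
    (hB : ∀ b ∈ B, (R m).1 < (R b).1) (hi : (R i).1 ≤ (R m).1) :
    Sel R (A ∪ B) i = Sel R A i := by
  have hkey : ∀ b ∈ B, |(R i).1 - (R m).1| < |(R i).1 - (R b).1| := by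
    intro b hb
    have h1 := hB b hb
    have h2 : |(R i).1 - (R m).1| = (R m).1 - (R i).1 := by
      rw [abs_sub_comm]; exact abs_of_nonneg (by linarith)
    have h3 : |(R i).1 - (R b).1| = (R b).1 - (R i).1 := by
      rw [abs_sub_comm]; exact abs_of_nonneg (by linarith)
    rw [h2, h3]; linarith
  ext x
  simp only [Sel, Set.mem_setOf_eq]
  constructor
  · rintro ⟨hx, hmin⟩
    rcases Finset.mem_union.mp hx with h | h
    · exact ⟨h, fun j' hj' => hmin j' (Finset.mem_union_left _ hj')⟩
    · exact absurd (hmin m (Finset.mem_union_left _ hmA)) (not_le.mpr (hkey x h))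
  · rintro ⟨hx, hmin⟩
    refine ⟨Finset.mem_union_left _ hx, fun j' hj' => ?_⟩
    rcases Finset.mem_union.mp hj' with h | h
    · exact hmin j' h
    · exact le_of_lt (lt_of_le_of_lt (hmin m hmA) (hkey j' h))

lemma sel_union_right (R : ℕ → ℝ × ℝ) (A B : Finset ℕ) (m i : ℕ)
    (hmA : m ∈ A) (hA : ∀ a ∈ A, a ≠ m → (R a).1 < (R m).1)
    (hi : (R m).1 < (R i).1) :
    Sel R (A ∪ B) i = Sel R ({m} ∪ B) i := by
  have hkey : ∀ a ∈ A, a ≠ m → |(R i).1 - (R m).1| < |(R i).1 - (R a).1| := by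
    intro a ha hne
    have h1 := hA a ha hne
    rw [abs_of_nonneg (by linarith : (0:ℝ) ≤ (R i).1 - (R m).1),
        abs_of_nonneg (by linarith : (0:ℝ) ≤ (R i).1 - (R a).1)]
    linarith
  ext x
  simp only [Sel, Set.mem_setOf_eq]
  constructor
  · rintro ⟨hx, hmin⟩
    rcases Finset.mem_union.mp hx with h | h
    · by_cases hxm : x = m
      · refine ⟨Finset.mem_union_left _ (by rw [hxm]; exact Finset.mem_singleton_self m),
          fun j' hj' => ?_⟩
        rcases Finset.mem_union.mp hj' with h' | h'
        · exact le_of_eq (by rw [hxm, Finset.mem_singleton.mp h'])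
        · exact hmin j' (Finset.mem_union_right _ h')
      · exact absurd (hmin m (Finset.mem_union_left _ hmA))
          (not_le.mpr (hkey x h hxm))
    · refine ⟨Finset.mem_union_right _ h, fun j' hj' => ?_⟩
      rcases Finset.mem_union.mp hj' with h' | h'
      · rw [Finset.mem_singleton.mp h']
        exact hmin m (Finset.mem_union_left _ hmA)
      · exact hmin j' (Finset.mem_union_right _ h')
  · rintro ⟨hx, hmin⟩
    have hxAB : x ∈ A ∪ B := by
      rcases Finset.mem_union.mp hx with h' | h'
      · rw [Finset.mem_singleton.mp h']; exact Finset.mem_union_left _ hmA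
      · exact Finset.mem_union_right _ h'
    refine ⟨hxAB, fun j' hj' => ?_⟩
    rcases Finset.mem_union.mp hj' with h' | h'
    · by_cases hjm : j' = m
      · rw [hjm]
        exact hmin m (Finset.mem_union_left _ (Finset.mem_singleton_self m))
      · have hle := hmin m (Finset.mem_union_left _ (Finset.mem_singleton_self m))
        exact le_of_lt (lt_of_le_of_lt hle (hkey j' h' hjm))
    · exact hmin j' (Finset.mem_union_right _ h')

/-- Every j-prefix of an optimal k-set is left optimal. -/
theorem stmt_5 (R : ℕ → ℝ × ℝ) (n k : ℕ) (hk1 : 1 ≤ k) (hkn : k ≤ n)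
    (hmono : ∀ a b : ℕ, a < b → (R a).1 < (R b).1)
    (Cstar : Finset ℕ) (hsub : Cstar ⊆ Finset.Icc 1 n) (hcard : Cstar.card = k)
    (hopt : ∀ D : Finset ℕ, D ⊆ Finset.Icc 1 n → D.card = k →
      totalCost R n Cstar ≤ totalCost R n D) :
    ∀ j, 1 ≤ j → j ≤ k →
      ∀ P : Finset ℕ, P ⊆ Cstar → P.card = j →
        (∀ a ∈ P, ∀ b ∈ Cstar, b ∉ P → a < b) →
        LeftOptimal R n P := by
  intro j hj1 hjk P hPsub hPcard hPmin
  intro D hDsub hDcard hDsup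
  set m := P.sup id with hm
  have hPne : P.Nonempty := Finset.card_pos.mp (by rw [hPcard]; exact hj1)
  have hDne : D.Nonempty := Finset.card_pos.mp (by rw [hDcard, hPcard]; exact hj1)
  have hmP : m ∈ P := by
    obtain ⟨a, ha, hae⟩ := Finset.exists_mem_eq_sup P hPne id
    rw [hm, hae]; exact ha
  have hmD : m ∈ D := by
    obtain ⟨a, ha, hae⟩ := Finset.exists_mem_eq_sup D hDne id
    rw [← hDsup, hae]; exact ha
  have hPle : ∀ a ∈ P, a ≤ m := fun a ha => Finset.le_sup (f := id) ha
  have hDle : ∀ a ∈ D, a ≤ m := fun a ha => by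
    rw [← hDsup]; exact Finset.le_sup (f := id) ha
  set B := Cstar \ P with hB
  have hBgt : ∀ b ∈ B, m < b := fun b hb => by
    rw [hB, Finset.mem_sdiff] at hb
    exact hPmin m hmP b hb.1 hb.2
  have hRle : ∀ a, a ≤ m → (R a).1 ≤ (R m).1 := fun a ha => by
    rcases eq_or_lt_of_le ha with h | h
    · rw [h]
    · exact le_of_lt (hmono a m h)
  have hRlt : ∀ a, a ≤ m → a ≠ m → (R a).1 < (R m).1 := fun a ha hne =>
    hmono a m (lt_of_le_of_ne ha hne)
  have hRBgt : ∀ b ∈ B, (R m).1 < (R b).1 := fun b hb => hmono m b (hBgt b hb)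
  set E := D ∪ B with hE
  have hdisj : Disjoint D B := by
    rw [Finset.disjoint_left]
    intro a haD haB
    exact absurd (hBgt a haB) (not_lt.mpr (hDle a haD))
  have hEcard : E.card = k := by
    rw [hE, Finset.card_union_of_disjoint hdisj, hDcard, hPcard, hB,
      Finset.card_sdiff_of_subset hPsub, hcard, hPcard]
    omega
  have hEsub : E ⊆ Finset.Icc 1 n :=
    Finset.union_subset hDsub (fun b hb => hsub (Finset.mem_sdiff.mp hb).1)
  have hCeq : Cstar = P ∪ B := (Finset.union_sdiff_of_subset hPsub).symm
  -- cost equalities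
  have hleftC : ∀ i, (R i).1 ≤ (R m).1 → tCost R Cstar i = tCost R P i := by
    intro i hi
    rw [hCeq]
    exact tCost_congr _ _ _ _ (sel_union_left R P B m i hmP (fun a ha => hRle a (hPle a ha)) hRBgt hi)
  have hleftE : ∀ i, (R i).1 ≤ (R m).1 → tCost R E i = tCost R D i := by
    intro i hi
    exact tCost_congr _ _ _ _ (sel_union_left R D B m i hmD (fun a ha => hRle a (hDle a ha)) hRBgt hi)
  have hrightCE : ∀ i, ¬ (R i).1 ≤ (R m).1 → tCost R Cstar i = tCost R E i := by
    intro i hi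
    rw [not_le] at hi
    have h1 : Sel R (P ∪ B) i = Sel R ({m} ∪ B) i :=
      sel_union_right R P B m i hmP (fun a ha hne => hRlt a (hPle a ha) hne) hi
    have h2 : Sel R (D ∪ B) i = Sel R ({m} ∪ B) i :=
      sel_union_right R D B m i hmD (fun a ha hne => hRlt a (hDle a ha) hne) hi
    rw [hCeq]
    exact tCost_congr _ _ _ _ (h1.trans h2.symm)
  -- split the total cost
  have split : ∀ C : Finset ℕ,
      totalCost R n C
        = (∑ i ∈ (Finset.Icc 1 n).filter (fun i => (R i).1 ≤ (R m).1), tCost R C i)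
          + ∑ i ∈ (Finset.Icc 1 n).filter (fun i => ¬ (R i).1 ≤ (R m).1), tCost R C i := by
    intro C
    rw [totalCost,
      ← Finset.sum_filter_add_sum_filter_not (Finset.Icc 1 n) (fun i => (R i).1 ≤ (R m).1)]
  have e1 : ∑ i ∈ (Finset.Icc 1 n).filter (fun i => (R i).1 ≤ (R m).1), tCost R Cstar i
      = ∑ i ∈ (Finset.Icc 1 n).filter (fun i => (R i).1 ≤ (R m).1), tCost R P i :=
    Finset.sum_congr rfl (fun i hi => hleftC i (Finset.mem_filter.mp hi).2)
  have e2 : ∑ i ∈ (Finset.Icc 1 n).filter (fun i => (R i).1 ≤ (R m).1), tCost R E i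
      = ∑ i ∈ (Finset.Icc 1 n).filter (fun i => (R i).1 ≤ (R m).1), tCost R D i :=
    Finset.sum_congr rfl (fun i hi => hleftE i (Finset.mem_filter.mp hi).2)
  have e3 : ∑ i ∈ (Finset.Icc 1 n).filter (fun i => ¬ (R i).1 ≤ (R m).1), tCost R Cstar i
      = ∑ i ∈ (Finset.Icc 1 n).filter (fun i => ¬ (R i).1 ≤ (R m).1), tCost R E i :=
    Finset.sum_congr rfl (fun i hi => hrightCE i (Finset.mem_filter.mp hi).2)
  have key := hopt E hEsub hEcard
  rw [split Cstar, split E, e1, e2, e3] at key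
  have hmain : ∑ i ∈ (Finset.Icc 1 n).filter (fun i => (R i).1 ≤ (R m).1), tCost R P i
      ≤ ∑ i ∈ (Finset.Icc 1 n).filter (fun i => (R i).1 ≤ (R m).1), tCost R D i := by
    linarith
  show leftCost R n P ≤ leftCost R n D
  rw [leftCost, leftCost, hDsup, ← hm]
  exact hmain
end

section
/- Let C_j = {R_{i₁},…,R_{iⱼ}} be a j-subset of R which is left optimal. Then every prefix {R_{i₁},…,R_{i_l}} of C_j (1 ≤ l ≤ j) is also left optimal. -/
/-- If every element of `C` outside `S` is strictly dominated (in time distance to `R i`)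
by an element `m ∈ S`, then the set of time-nearest points of `C` equals that of `S`. -/
lemma argSet_eq (R : ℕ → ℝ × ℝ) (C S : Finset ℕ) (i m : ℕ)
    (hS : S ⊆ C) (hm : m ∈ S)
    (hdom : ∀ b ∈ C, b ∉ S → |(R i).1 - (R m).1| < |(R i).1 - (R b).1|) :
    {j | j ∈ C ∧ ∀ j' ∈ C, |(R i).1 - (R j).1| ≤ |(R i).1 - (R j').1|}
      = {j | j ∈ S ∧ ∀ j' ∈ S, |(R i).1 - (R j).1| ≤ |(R i).1 - (R j').1|} := by
  ext j
  simp only [Set.mem_setOf_eq]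
  constructor
  · rintro ⟨hjC, hmin⟩
    have hjS : j ∈ S := by
      by_contra hj
      exact absurd (hmin m (hS hm)) (not_le.mpr (hdom j hjC hj))
    exact ⟨hjS, fun j' hj' => hmin j' (hS hj')⟩
  · rintro ⟨hjS, hmin⟩
    refine ⟨hS hjS, fun j' hj' => ?_⟩
    by_cases h : j' ∈ S
    · exact hmin j' h
    · exact le_trans (hmin m hm) (le_of_lt (hdom j' hj' h))

lemma tCost_congr_s6 (R : ℕ → ℝ × ℝ) (C S : Finset ℕ) (i m : ℕ)
    (hS : S ⊆ C) (hm : m ∈ S)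
    (hdom : ∀ b ∈ C, b ∉ S → |(R i).1 - (R m).1| < |(R i).1 - (R b).1|) :
    tCost R C i = tCost R S i := by
  unfold tCost
  rw [argSet_eq R C S i m hS hm hdom]

/-- Every prefix of a left optimal j-set is left optimal. -/
theorem stmt_6 (R : ℕ → ℝ × ℝ) (n : ℕ)
    (hmono : ∀ a b : ℕ, a < b → (R a).1 < (R b).1)
    (C : Finset ℕ) (hsub : C ⊆ Finset.Icc 1 n)
    (hlo : LeftOptimal R n C) :
    ∀ P : Finset ℕ, P ⊆ C → P.Nonempty →
      (∀ a ∈ P, ∀ b ∈ C, b ∉ P → a < b) →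
      LeftOptimal R n P := by
  intro P hPC hPne hpref D hDsub hDcard hDsup
  have hwmono : ∀ a b : ℕ, a ≤ b → (R a).1 ≤ (R b).1 := by
    intro a b h
    rcases h.lt_or_eq with h | h
    · exact (hmono a b h).le
    · rw [h]
  set m := P.sup id with hm_def
  obtain ⟨m', hm'P, hm'⟩ := P.exists_mem_eq_sup hPne id
  have hmP : m ∈ P := by rw [hm_def, hm']; exact hm'P
  have hPle : ∀ p ∈ P, p ≤ m := fun p hp => Finset.le_sup (f := id) hp
  have hDne : D.Nonempty := Finset.card_pos.mp (by rw [hDcard]; exact Finset.card_pos.mpr hPne)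
  obtain ⟨d', hd'D, hd'⟩ := D.exists_mem_eq_sup hDne id
  have hmD : m ∈ D := by rw [← hDsup, hd']; exact hd'D
  have hDle : ∀ p ∈ D, p ≤ m := by
    intro p hp
    have := Finset.le_sup (f := id) hp
    rw [hDsup] at this
    exact this
  have hCP : ∀ b ∈ C, b ∉ P → m < b := fun b hb hbP => hpref m hmP b hb hbP
  -- the exchanged set
  set C' := D ∪ (C \ P) with hC'_def
  have hC'sub : C' ⊆ Finset.Icc 1 n :=
    Finset.union_subset hDsub (le_trans (Finset.sdiff_subset) hsub)
  have hdisj : Disjoint D (C \ P) := by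
    rw [Finset.disjoint_left]
    intro a haD haCP
    rw [Finset.mem_sdiff] at haCP
    exact absurd (hCP a haCP.1 haCP.2) (not_lt.mpr (hDle a haD))
  have hC'card : C'.card = C.card := by
    rw [hC'_def, Finset.card_union_of_disjoint hdisj, hDcard]
    have := Finset.card_sdiff_add_card_eq_card hPC
    omega
  have hC'sup : C'.sup id = C.sup id := by
    conv_rhs => rw [← Finset.union_sdiff_of_subset hPC]
    rw [hC'_def, Finset.sup_union, Finset.sup_union, hDsup]
  -- key pointwise identities
  have key1 : ∀ i, (R i).1 ≤ (R m).1 → tCost R C i = tCost R P i := by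
    intro i hi
    refine tCost_congr_s6 R C P i m hPC hmP ?_
    intro b hb hbP
    have hmb := hmono m b (hCP b hb hbP)
    have h1 : |(R i).1 - (R m).1| = (R m).1 - (R i).1 := by
      rw [abs_of_nonpos (by linarith)]; ring
    have h2 : |(R i).1 - (R b).1| = (R b).1 - (R i).1 := by
      rw [abs_of_nonpos (by linarith)]; ring
    linarith
  have key1D : ∀ i, (R i).1 ≤ (R m).1 → tCost R C' i = tCost R D i := by
    intro i hi
    refine tCost_congr_s6 R C' D i m Finset.subset_union_left hmD ?_
    intro b hb hbD
    have hbCP : b ∈ C \ P := by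
      rcases Finset.mem_union.mp hb with h | h
      · exact absurd h hbD
      · exact h
    rw [Finset.mem_sdiff] at hbCP
    have hmb := hmono m b (hCP b hbCP.1 hbCP.2)
    have h1 : |(R i).1 - (R m).1| = (R m).1 - (R i).1 := by
      rw [abs_of_nonpos (by linarith)]; ring
    have h2 : |(R i).1 - (R b).1| = (R b).1 - (R i).1 := by
      rw [abs_of_nonpos (by linarith)]; ring
    linarith
  have key2 : ∀ i, ¬ (R i).1 ≤ (R m).1 → tCost R C i = tCost R C' i := by
    intro i hi
    push_neg at hi
    set Q := insert m (C \ P) with hQ_def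
    have hQC : Q ⊆ C := Finset.insert_subset (hPC hmP) (Finset.sdiff_subset)
    have hQC' : Q ⊆ C' :=
      Finset.insert_subset (Finset.mem_union_left _ hmD) Finset.subset_union_right
    have hmQ : m ∈ Q := Finset.mem_insert_self _ _
    have dom1 : ∀ b ∈ C, b ∉ Q → |(R i).1 - (R m).1| < |(R i).1 - (R b).1| := by
      intro b hb hbQ
      rw [hQ_def, Finset.mem_insert, Finset.mem_sdiff] at hbQ
      push_neg at hbQ
      have hbP : b ∈ P := hbQ.2 hb
      have hblt : b < m := lt_of_le_of_ne (hPle b hbP) hbQ.1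
      have hbm := hmono b m hblt
      have h1 : |(R i).1 - (R m).1| = (R i).1 - (R m).1 := by
        rw [abs_of_nonneg (by linarith)]
      have h2 : |(R i).1 - (R b).1| = (R i).1 - (R b).1 := by
        rw [abs_of_nonneg (by linarith)]
      linarith
    have dom2 : ∀ b ∈ C', b ∉ Q → |(R i).1 - (R m).1| < |(R i).1 - (R b).1| := by
      intro b hb hbQ
      rw [hQ_def, Finset.mem_insert] at hbQ
      push_neg at hbQ
      have hbD : b ∈ D := by
        rcases Finset.mem_union.mp hb with h | h
        · exact h
        · exact absurd h hbQ.2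
      have hblt : b < m := lt_of_le_of_ne (hDle b hbD) hbQ.1
      have hbm := hmono b m hblt
      have h1 : |(R i).1 - (R m).1| = (R i).1 - (R m).1 := by
        rw [abs_of_nonneg (by linarith)]
      have h2 : |(R i).1 - (R b).1| = (R i).1 - (R b).1 := by
        rw [abs_of_nonneg (by linarith)]
      linarith
    rw [tCost_congr_s6 R C Q i m hQC hmQ dom1, tCost_congr_s6 R C' Q i m hQC' hmQ dom2]
  -- sum manipulations
  have hmain := hlo C' hC'sub hC'card hC'sup
  have hxm_le : (R m).1 ≤ (R (C.sup id)).1 :=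
    hwmono m _ (Finset.le_sup (f := id) (hPC hmP))
  set F := (Finset.Icc 1 n).filter (fun i => (R i).1 ≤ (R (C.sup id)).1) with hF_def
  have hF1 : F.filter (fun i => (R i).1 ≤ (R m).1)
      = (Finset.Icc 1 n).filter (fun i => (R i).1 ≤ (R m).1) := by
    ext i
    rw [hF_def]
    simp only [Finset.mem_filter]
    constructor
    · rintro ⟨⟨hi, _⟩, h2⟩; exact ⟨hi, h2⟩
    · rintro ⟨hi, h2⟩; exact ⟨⟨hi, le_trans h2 hxm_le⟩, h2⟩
  have eC : leftCost R n C = leftCost R n P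
      + ∑ i ∈ F.filter (fun i => ¬ (R i).1 ≤ (R m).1), tCost R C i := by
    have : leftCost R n C = ∑ i ∈ F, tCost R C i := rfl
    rw [this, ← Finset.sum_filter_add_sum_filter_not F (fun i => (R i).1 ≤ (R m).1)]
    congr 1
    rw [hF1]
    unfold leftCost
    rw [← hm_def]
    exact Finset.sum_congr rfl (fun i hi => key1 i (Finset.mem_filter.mp hi).2)
  have eC' : leftCost R n C' = leftCost R n D
      + ∑ i ∈ F.filter (fun i => ¬ (R i).1 ≤ (R m).1), tCost R C i := by
    have h0 : leftCost R n C' = ∑ i ∈ F, tCost R C' i := by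
      unfold leftCost
      rw [hC'sup, hF_def]
    rw [h0, ← Finset.sum_filter_add_sum_filter_not F (fun i => (R i).1 ≤ (R m).1)]
    congr 1
    · rw [hF1]
      unfold leftCost
      rw [hDsup]
      exact Finset.sum_congr rfl (fun i hi => key1D i (Finset.mem_filter.mp hi).2)
    · exact Finset.sum_congr rfl (fun i hi => ((key2 i (Finset.mem_filter.mp hi).2).symm))
  linarith [hmain, eC.symm ▸ hmain]
end

section
/- Let x₀ < x₁ < ⋯ < xₙ be reals and let R : [x₀,xₙ] → ℝ be a step function constant on each [xᵢ, x_{i+1}). For k < n, among all step functions M on [x₀,xₙ] with at most k pieces (given by a partition t₀ = x₀ < t₁ < ⋯ < t_k = xₙ and constant values on each piece) minimizing ∫ |R - M|, there exists one whose partition points satisfy {t₀,…,t_k} ⊆ {x₀,…,xₙ}. -/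
open MeasureTheory

def IsStepOn (f : ℝ → ℝ) (t : ℕ → ℝ) (k : ℕ) : Prop :=
  ∀ j < k, ∀ u ∈ Set.Ico (t j) (t (j+1)), f u = f (t j)

/-!
Fix the values of a competing step function and move its breakpoints. If `v` is a breakpoint
that is not a node `x i`, let `L < v < U` be the nearest nodes or breakpoints around it. `R` is
constant on `[L, U)`, so the loss is affine in the common position `p ∈ [L, U]` of the breakpoints
equal to `v`, and `p = L` or `p = U` does no worse; either choice removes `v` from the breakpoints
off the nodes. Once all breakpoints are nodes, each value can be replaced by a value of `R`: on the
finite set of values of `R`, `|r - w|` is a convex combination of `|r - lo|` and `|r - hi|` for the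
neighbours `lo ≤ w ≤ hi` of `w`. This leaves finitely many losses, so a minimizer exists, and since
`k ≤ n` its coinciding breakpoints can be separated by further nodes.
-/

open Set

variable {n k : ℕ} {x s t c : ℕ → ℝ} {R : ℝ → ℝ} {a b u v p L U r : ℝ}

theorem monotoneOn_Iic_of_le_succ (h : ∀ j < k, s j ≤ s (j + 1)) : MonotoneOn s (Iic k) :=
  monotoneOn_of_le_succ ordConnected_Iic fun _ hj' _ hj =>
    h _ ((Order.succ_le_iff_of_not_isMax hj').1 hj)

structure IsWeakPartition (s : ℕ → ℝ) (k : ℕ) (a b : ℝ) : Prop where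
  zero : s 0 = a
  last : s k = b
  mono : MonotoneOn s (Iic k)

namespace IsWeakPartition

theorem le_succ (hs : IsWeakPartition s k a b) {j : ℕ} (hj : j < k) : s j ≤ s (j + 1) :=
  hs.mono (mem_Iic.2 hj.le) (mem_Iic.2 hj) j.le_succ

theorem mem_Icc (hs : IsWeakPartition s k a b) {j : ℕ} (hj : j ≤ k) : s j ∈ Icc a b :=
  ⟨hs.zero ▸ hs.mono (mem_Iic.2 k.zero_le) (mem_Iic.2 hj) j.zero_le,
    hs.last ▸ hs.mono (mem_Iic.2 hj) (mem_Iic.2 le_rfl) hj⟩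

end IsWeakPartition

noncomputable def nodes (x : ℕ → ℝ) (n : ℕ) : Finset ℝ := (Finset.range (n + 1)).image x

theorem mem_nodes : u ∈ nodes x n ↔ ∃ i ≤ n, x i = u := by
  simp [nodes]

theorem zero_mem_nodes : x 0 ∈ nodes x n := mem_nodes.2 ⟨0, n.zero_le, rfl⟩

theorem last_mem_nodes : x n ∈ nodes x n := mem_nodes.2 ⟨n, le_rfl, rfl⟩

theorem nodes_subset_Icc (hx : MonotoneOn x (Iic n)) (hu : u ∈ nodes x n) :
    u ∈ Icc (x 0) (x n) := by
  obtain ⟨i, hi, rfl⟩ := mem_nodes.1 hu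
  exact ⟨hx (mem_Iic.2 n.zero_le) (mem_Iic.2 hi) i.zero_le,
    hx (mem_Iic.2 hi) (mem_Iic.2 le_rfl) hi⟩

theorem exists_mem_Ico_of_mem_Ico (hu : u ∈ Ico (x 0) (x n)) :
    ∃ i < n, u ∈ Ico (x i) (x (i + 1)) := by
  classical
  have hle : x (Nat.findGreatest (fun i => x i ≤ u) n) ≤ u :=
    Nat.findGreatest_spec (P := fun i => x i ≤ u) n.zero_le hu.1
  have hlt : Nat.findGreatest (fun i => x i ≤ u) n < n :=
    (Nat.findGreatest_le n).lt_of_ne fun h => (h ▸ hle).not_gt hu.2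
  exact ⟨_, hlt, hle, not_le.1 (Nat.findGreatest_is_greatest (Nat.lt_succ_self _) hlt)⟩

namespace IsStepOn

theorem mem_image_nodes (hR : IsStepOn R x n) (hu : u ∈ Icc (x 0) (x n)) :
    R u ∈ (nodes x n).image R := by
  rcases hu.2.eq_or_lt with rfl | hun
  · exact Finset.mem_image_of_mem R last_mem_nodes
  obtain ⟨i, hi, hiu⟩ := exists_mem_Ico_of_mem_Ico ⟨hu.1, hun⟩
  rw [hR i hi u hiu]
  exact Finset.mem_image_of_mem R (mem_nodes.2 ⟨i, hi.le, rfl⟩)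

theorem intervalIntegrable (hx : MonotoneOn x (Iic n)) (hR : IsStepOn R x n) :
    IntervalIntegrable R volume (x 0) (x n) := by
  refine IntervalIntegrable.trans_iterate fun i hi =>
    (intervalIntegrable_const (c := R (x i))).congr_uIoo ?_
  rw [uIoo_of_le (hx (mem_Iic.2 hi.le) (mem_Iic.2 hi) i.le_succ)]
  exact fun u hu => (hR i hi u ⟨hu.1.le, hu.2⟩).symm

theorem intervalIntegrable_abs_sub (hx : MonotoneOn x (Iic n)) (hR : IsStepOn R x n)
    (ha : a ∈ Icc (x 0) (x n)) (hb : b ∈ Icc (x 0) (x n)) (w : ℝ) :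
    IntervalIntegrable (fun u => |R u - w|) volume a b :=
  ((hR.intervalIntegrable hx).sub intervalIntegrable_const).abs.mono_set
    (uIcc_subset_uIcc (Icc_subset_uIcc ha) (Icc_subset_uIcc hb))

end IsStepOn

noncomputable def stepLoss (R : ℝ → ℝ) (k : ℕ) (s c : ℕ → ℝ) : ℝ :=
  ∑ j ∈ Finset.range k, ∫ u in s j..s (j + 1), |R u - c j|

theorem integral_abs_sub_eq_stepLoss (hx : MonotoneOn x (Iic n)) (hR : IsStepOn R x n)
    (hs : IsWeakPartition s k (x 0) (x n)) {N : ℝ → ℝ}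
    (hN : ∀ j < k, ∀ u ∈ Ico (s j) (s (j + 1)), N u = c j) :
    ∫ u in Ico (x 0) (x n), |R u - N u| = stepLoss R k s c := by
  have hpiece : ∀ j < k,
      EqOn (fun u => |R u - c j|) (fun u => |R u - N u|) (Ioo (s j) (s (j + 1))) :=
    fun j hj u hu => by simp only [hN j hj u (Ioo_subset_Ico_self hu)]
  have hint : ∀ j < k, IntervalIntegrable (fun u => |R u - N u|) volume (s j) (s (j + 1)) :=
    fun j hj => (hR.intervalIntegrable_abs_sub hx (hs.mem_Icc hj.le) (hs.mem_Icc hj)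
      (c j)).congr_uIoo (uIoo_of_le (hs.le_succ hj) ▸ hpiece j hj)
  have hx0n : x 0 ≤ x n := (hs.mem_Icc k.zero_le).1.trans (hs.mem_Icc k.zero_le).2
  rw [integral_Ico_eq_integral_Ioo, ← integral_Ioc_eq_integral_Ioo,
    ← intervalIntegral.integral_of_le hx0n, ← hs.zero, ← hs.last,
    ← intervalIntegral.sum_integral_adjacent_intervals hint]
  exact Finset.sum_congr rfl fun j hj => (intervalIntegral.integral_congr_Ioo_of_le
    (hs.le_succ (Finset.mem_range.1 hj)) (hpiece j (Finset.mem_range.1 hj))).symm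

/-- The function with value `c j` on `[s j, s (j + 1))`, found by counting breakpoints up to `u`. -/
noncomputable def stepFun (k : ℕ) (s c : ℕ → ℝ) (u : ℝ) : ℝ :=
  c ((Finset.range k).filter fun l => s (l + 1) ≤ u).card

theorem IsWeakPartition.stepFun_eq (hs : IsWeakPartition s k a b) {j : ℕ} (hj : j < k)
    (hu : u ∈ Ico (s j) (s (j + 1))) : stepFun k s c u = c j := by
  suffices h : (Finset.range k).filter (fun l => s (l + 1) ≤ u) = Finset.range j by
    rw [stepFun, h, Finset.card_range]
  ext l
  simp only [Finset.mem_filter, Finset.mem_range]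
  constructor
  · rintro ⟨hlk, hl⟩
    by_contra! hjl
    exact (hu.2.trans_le (hs.mono (mem_Iic.2 hj) (mem_Iic.2 hlk) (by omega))).not_ge hl
  · intro hlj
    exact ⟨hlj.trans hj, (hs.mono (mem_Iic.2 (by omega)) (mem_Iic.2 hj.le) hlj).trans hu.1⟩

theorem isStepOn_stepFun {k' : ℕ} (hsep : ∀ j < k', ∀ l ≤ k, s l ≤ t j ∨ t (j + 1) ≤ s l) :
    IsStepOn (stepFun k s c) t k' := by
  intro j hj u hu
  rw [stepFun, stepFun, Finset.filter_congr (p := fun l => s (l + 1) ≤ u)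
    (q := fun l => s (l + 1) ≤ t j) fun l hl => ?_]
  have hsep := hsep j hj (l + 1) (Finset.mem_range.1 hl)
  constructor
  · intro h; exact hsep.resolve_right fun h' => (h'.trans h).not_gt hu.2
  · intro h; exact h.trans hu.1

theorem Finset.exists_nearest_lt_gt {S : Finset ℝ} (ha : a ∈ S) (hav : a < v) (hb : b ∈ S)
    (hvb : v < b) : ∃ L ∈ S, ∃ U ∈ S, L < v ∧ v < U ∧ ∀ y ∈ S, y ≠ v → y ≤ L ∨ U ≤ y := by
  classical
  have hlo : (S.filter (· < v)).Nonempty := ⟨a, Finset.mem_filter.2 ⟨ha, hav⟩⟩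
  have hhi : (S.filter (v < ·)).Nonempty := ⟨b, Finset.mem_filter.2 ⟨hb, hvb⟩⟩
  obtain ⟨hLS, hLv⟩ := Finset.mem_filter.1 ((S.filter (· < v)).max'_mem hlo)
  obtain ⟨hUS, hvU⟩ := Finset.mem_filter.1 ((S.filter (v < ·)).min'_mem hhi)
  refine ⟨_, hLS, _, hUS, hLv, hvU, fun y hy hyv => ?_⟩
  rcases hyv.lt_or_gt with h | h
  · exact Or.inl (Finset.le_max' _ y (Finset.mem_filter.2 ⟨hy, h⟩))
  · exact Or.inr (Finset.min'_le _ y (Finset.mem_filter.2 ⟨hy, h⟩))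

theorem IsStepOn.exists_const_on_Ico (hR : IsStepOn R x n) (hL : x 0 ≤ L) (hLU : L < U)
    (hU : U ≤ x n) (hgap : ∀ i ≤ n, x i ≤ L ∨ U ≤ x i) : ∃ r, ∀ u ∈ Ico L U, R u = r := by
  obtain ⟨i, hi, hxi, hLi⟩ := exists_mem_Ico_of_mem_Ico ⟨hL, hLU.trans_le hU⟩
  have hUi : U ≤ x (i + 1) := (hgap (i + 1) hi).resolve_left hLi.not_ge
  exact ⟨R (x i), fun u hu => hR i hi u ⟨hxi.trans hu.1, hu.2.trans_le hUi⟩⟩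

theorem le_or_le_of_eq_add_mul {f : ℝ → ℝ} {K : ℝ} (hf : ∀ p ∈ Icc L U, f p = f L + (p - L) * K)
    (hv : v ∈ Icc L U) : f L ≤ f v ∨ f U ≤ f v := by
  have hfU := hf U ⟨hv.1.trans hv.2, le_rfl⟩
  have hfv := hf v hv
  rcases le_total 0 K with hK | hK
  · exact Or.inl (by nlinarith [mul_nonneg (sub_nonneg.2 hv.1) hK])
  · exact Or.inr (by nlinarith [mul_nonneg (sub_nonneg.2 hv.2) (neg_nonneg.2 hK)])

noncomputable def replaceValue (s : ℕ → ℝ) (v p : ℝ) : ℕ → ℝ := fun j => if s j = v then p else s j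

theorem replaceValue_self (s : ℕ → ℝ) (v : ℝ) : replaceValue s v v = s :=
  funext fun j => by by_cases h : s j = v <;> simp [replaceValue, h]

theorem IsWeakPartition.replaceValue (hs : IsWeakPartition s k a b) (ha : a ≠ v) (hb : b ≠ v)
    (hlo : ∀ j ≤ k, s j < v → s j ≤ p) (hhi : ∀ j ≤ k, v < s j → p ≤ s j) :
    IsWeakPartition (replaceValue s v p) k a b where
  zero := by simp [_root_.replaceValue, hs.zero, ha]
  last := by simp [_root_.replaceValue, hs.last, hb]
  mono i hi j hj hij := by
    have hsij := hs.mono hi hj hij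
    unfold _root_.replaceValue
    split_ifs with hsi hsj hsj
    · exact le_rfl
    · exact hhi j hj (lt_of_le_of_ne (hsi ▸ hsij) (Ne.symm hsj))
    · exact hlo i hi (lt_of_le_of_ne (hsj ▸ hsij) hsi)
    · exact hsij

theorem stepLoss_replaceValue_eq_add_mul (hx : MonotoneOn x (Iic n)) (hR : IsStepOn R x n)
    (hs : ∀ j ≤ k, s j ∈ Icc (x 0) (x n)) (hL : x 0 ≤ L) (hLU : L ≤ U) (hU : U ≤ x n)
    (hr : ∀ u ∈ Ico L U, R u = r) (v : ℝ) (c : ℕ → ℝ) :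
    ∃ K, ∀ p ∈ Icc L U,
      stepLoss R k (replaceValue s v p) c = stepLoss R k (replaceValue s v L) c + (p - L) * K := by
  set G : ℝ → ℝ → ℝ := fun w q => ∫ u in x 0..q, |R u - w|
  have hx0 : x 0 ∈ Icc (x 0) (x n) := ⟨le_rfl, hL.trans (hLU.trans hU)⟩
  have hint := fun w {q q'} (hq : q ∈ Icc (x 0) (x n)) (hq' : q' ∈ Icc (x 0) (x n)) =>
    hR.intervalIntegrable_abs_sub hx hq hq' w
  have hG : ∀ w, ∀ p ∈ Icc L U, G w p = G w L + (p - L) * |r - w| := by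
    intro w p hp
    have hLmem : L ∈ Icc (x 0) (x n) := ⟨hL, hLU.trans hU⟩
    have hpmem : p ∈ Icc (x 0) (x n) := ⟨hL.trans hp.1, hp.2.trans hU⟩
    simp only [G]
    rw [← intervalIntegral.integral_add_adjacent_intervals (hint w hx0 hLmem) (hint w hLmem hpmem),
      intervalIntegral.integral_congr_Ioo_of_le (g := fun _ => |r - w|) hp.1
        fun u hu => by simp only [hr u ⟨hu.1.le, hu.2.trans_le hp.2⟩],
      intervalIntegral.integral_const, smul_eq_mul]
  have hloss : ∀ p ∈ Icc L U, stepLoss R k (replaceValue s v p) c =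
      ∑ j ∈ Finset.range k,
        (G (c j) (replaceValue s v p (j + 1)) - G (c j) (replaceValue s v p j)) := by
    intro p hp
    have hmem : ∀ j ≤ k, replaceValue s v p j ∈ Icc (x 0) (x n) := fun j hj => by
      unfold replaceValue; split_ifs
      exacts [⟨hL.trans hp.1, hp.2.trans hU⟩, hs j hj]
    refine Finset.sum_congr rfl fun j hj => ?_
    have hj := Finset.mem_range.1 hj
    exact (intervalIntegral.integral_interval_sub_left (hint _ hx0 (hmem _ hj))
      (hint _ hx0 (hmem _ hj.le))).symm
  have hmove : ∀ p ∈ Icc L U, ∀ w j, G w (replaceValue s v p j) =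
      G w (replaceValue s v L j) + (p - L) * (if s j = v then |r - w| else 0) := by
    intro p hp w j
    unfold replaceValue
    split_ifs
    · exact hG w p hp
    · ring
  refine ⟨∑ j ∈ Finset.range k,
    ((if s (j + 1) = v then |r - c j| else 0) - (if s j = v then |r - c j| else 0)), fun p hp => ?_⟩
  rw [hloss p hp, hloss L ⟨le_rfl, hLU⟩, Finset.mul_sum, ← Finset.sum_add_distrib]
  refine Finset.sum_congr rfl fun j _ => ?_
  rw [hmove p hp, hmove p hp]
  ring

noncomputable def offNodes (x : ℕ → ℝ) (n k : ℕ) (s : ℕ → ℝ) : Finset ℝ :=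
  (Finset.range (k + 1)).image s \ nodes x n

theorem offNodes_replaceValue_subset (hp : p ∈ (Finset.range (k + 1)).image s ∪ nodes x n)
    (hpv : p ≠ v) : offNodes x n k (replaceValue s v p) ⊆ (offNodes x n k s).erase v := by
  intro y hy
  obtain ⟨hys, hyn⟩ := Finset.mem_sdiff.1 hy
  obtain ⟨j, hj, rfl⟩ := Finset.mem_image.1 hys
  unfold replaceValue at hyn ⊢
  split_ifs at hyn ⊢ with hjv
  · exact Finset.mem_erase.2
      ⟨hpv, Finset.mem_sdiff.2 ⟨(Finset.mem_union.1 hp).resolve_right hyn, hyn⟩⟩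
  · exact Finset.mem_erase.2 ⟨hjv, Finset.mem_sdiff.2 ⟨Finset.mem_image_of_mem s hj, hyn⟩⟩

theorem exists_stepLoss_le_of_mem_offNodes (hx : MonotoneOn x (Iic n)) (hR : IsStepOn R x n)
    (hs : IsWeakPartition s k (x 0) (x n)) (c : ℕ → ℝ) (hv : v ∈ offNodes x n k s) :
    ∃ s', IsWeakPartition s' k (x 0) (x n) ∧ (offNodes x n k s').card < (offNodes x n k s).card ∧
      stepLoss R k s' c ≤ stepLoss R k s c := by
  classical
  obtain ⟨hvs, hvn⟩ := Finset.mem_sdiff.1 hv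
  set S := (Finset.range (k + 1)).image s ∪ nodes x n
  have hsS : ∀ j ≤ k, s j ∈ S := fun j hj => Finset.mem_union_left _
    (Finset.mem_image_of_mem s (Finset.mem_range.2 (Nat.lt_succ_of_le hj)))
  have hS : ∀ y ∈ S, y ∈ Icc (x 0) (x n) := by
    intro y hy
    rcases Finset.mem_union.1 hy with hy | hy
    · obtain ⟨j, hj, rfl⟩ := Finset.mem_image.1 hy
      exact hs.mem_Icc (Nat.lt_succ_iff.1 (Finset.mem_range.1 hj))
    · exact nodes_subset_Icc hx hy
  have hvIcc := hS v (Finset.mem_union_left _ hvs)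
  obtain ⟨L, hLS, U, hUS, hLv, hvU, hgap⟩ := Finset.exists_nearest_lt_gt
    (Finset.mem_union_right _ zero_mem_nodes) (hvIcc.1.lt_of_ne fun h => hvn (h ▸ zero_mem_nodes))
    (Finset.mem_union_right _ last_mem_nodes) (hvIcc.2.lt_of_ne fun h => hvn (h ▸ last_mem_nodes))
  have hLU : L ≤ U := (hLv.trans hvU).le
  obtain ⟨r, hr⟩ := hR.exists_const_on_Ico (hS L hLS).1 (hLv.trans hvU) (hS U hUS).2 fun i hi =>
    hgap (x i) (Finset.mem_union_right _ (mem_nodes.2 ⟨i, hi, rfl⟩))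
      fun h => hvn (h ▸ mem_nodes.2 ⟨i, hi, rfl⟩)
  obtain ⟨K, hK⟩ := stepLoss_replaceValue_eq_add_mul hx hR (fun j hj => hs.mem_Icc hj)
    (hS L hLS).1 hLU (hS U hUS).2 hr v c
  obtain ⟨p, hpS, hpv, hLp, hpU, hle⟩ : ∃ p ∈ S, p ≠ v ∧ L ≤ p ∧ p ≤ U ∧
      stepLoss R k (replaceValue s v p) c ≤ stepLoss R k s c := by
    rcases le_or_le_of_eq_add_mul hK ⟨hLv.le, hvU.le⟩ with h | h <;> rw [replaceValue_self] at h
    · exact ⟨L, hLS, hLv.ne, le_rfl, hLU, h⟩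
    · exact ⟨U, hUS, hvU.ne', hLU, le_rfl, h⟩
  refine ⟨replaceValue s v p, hs.replaceValue (fun h => hvn (h ▸ zero_mem_nodes))
    (fun h => hvn (h ▸ last_mem_nodes))
    (fun j hj hjv => ((hgap _ (hsS j hj) hjv.ne).resolve_right (hjv.trans hvU).not_ge).trans hLp)
    (fun j hj hjv => hpU.trans ((hgap _ (hsS j hj) hjv.ne').resolve_left (hLv.trans hjv).not_ge)),
    Finset.card_lt_card ((offNodes_replaceValue_subset hpS hpv).trans_ssubset
      (Finset.erase_ssubset hv)), hle⟩

theorem exists_nodes_stepLoss_le (hx : MonotoneOn x (Iic n)) (hR : IsStepOn R x n)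
    (hs : IsWeakPartition s k (x 0) (x n)) (c : ℕ → ℝ) :
    ∃ t, IsWeakPartition t k (x 0) (x n) ∧ (∀ j ≤ k, t j ∈ nodes x n) ∧
      stepLoss R k t c ≤ stepLoss R k s c := by
  induction hm : (offNodes x n k s).card using Nat.strong_induction_on generalizing s with
  | _ m ih =>
    rcases (offNodes x n k s).eq_empty_or_nonempty with h | ⟨v, hv⟩
    · refine ⟨s, hs, fun j hj => ?_, le_rfl⟩
      by_contra hjn
      have hj : s j ∈ offNodes x n k s := Finset.mem_sdiff.2
        ⟨Finset.mem_image_of_mem s (Finset.mem_range.2 (Nat.lt_succ_of_le hj)), hjn⟩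
      simp [h] at hj
    · obtain ⟨s', hs', hlt, hle⟩ := exists_stepLoss_le_of_mem_offNodes hx hR hs c hv
      obtain ⟨t, ht, htn, hle'⟩ := ih _ (hm ▸ hlt) hs' rfl
      exact ⟨t, ht, htn, hle'.trans hle⟩

theorem Finset.exists_convexComb_abs_sub_le {F : Finset ℝ} (hF : F.Nonempty) (w : ℝ) :
    ∃ lo ∈ F, ∃ hi ∈ F, ∃ θ ∈ Set.Icc (0 : ℝ) 1,
      ∀ r ∈ F, θ * |r - lo| + (1 - θ) * |r - hi| ≤ |r - w| := by
  classical
  by_cases hlo : (F.filter (· ≤ w)).Nonempty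
  · by_cases hhi : (F.filter (w ≤ ·)).Nonempty
    · obtain ⟨hloF, hlow⟩ := Finset.mem_filter.1 ((F.filter (· ≤ w)).max'_mem hlo)
      obtain ⟨hhiF, hwhi⟩ := Finset.mem_filter.1 ((F.filter (w ≤ ·)).min'_mem hhi)
      set lo := (F.filter (· ≤ w)).max' hlo
      set hi := (F.filter (w ≤ ·)).min' hhi
      set θ := (hi - w) / (hi - lo)
      have hθ : θ * (hi - lo) = hi - w := by
        rcases (hlow.trans hwhi).eq_or_lt with h | h
        · simp [θ, h, le_antisymm (h ▸ hlow) hwhi]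
        · exact div_mul_cancel₀ _ (sub_pos.2 h).ne'
      have hhilo : 0 ≤ hi - lo := sub_nonneg.2 (hlow.trans hwhi)
      refine ⟨lo, hloF, hi, hhiF, θ, ⟨div_nonneg (sub_nonneg.2 hwhi) hhilo,
        div_le_one_of_le₀ (by linarith) hhilo⟩, fun r hr => ?_⟩
      rcases le_total r w with h | h
      · have hr' : r ≤ lo := Finset.le_max' _ r (Finset.mem_filter.2 ⟨hr, h⟩)
        rw [abs_of_nonpos (by linarith), abs_of_nonpos (by linarith), abs_of_nonpos (by linarith)]
        linarith
      · have hr' : hi ≤ r := Finset.min'_le _ r (Finset.mem_filter.2 ⟨hr, h⟩)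
        rw [abs_of_nonneg (by linarith), abs_of_nonneg (by linarith), abs_of_nonneg (by linarith)]
        linarith
    · have hw : F.max' hF < w := not_le.1 fun h => hhi ⟨_, Finset.mem_filter.2 ⟨F.max'_mem hF, h⟩⟩
      refine ⟨_, F.max'_mem hF, _, F.max'_mem hF, 1, ⟨zero_le_one, le_rfl⟩, fun r hr => ?_⟩
      have := F.le_max' r hr
      rw [one_mul, sub_self, zero_mul, add_zero, abs_of_nonpos (by linarith),
        abs_of_nonpos (by linarith)]
      linarith
  · have hw : w < F.min' hF := not_le.1 fun h => hlo ⟨_, Finset.mem_filter.2 ⟨F.min'_mem hF, h⟩⟩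
    refine ⟨_, F.min'_mem hF, _, F.min'_mem hF, 1, ⟨zero_le_one, le_rfl⟩, fun r hr => ?_⟩
    have := F.min'_le r hr
    rw [one_mul, sub_self, zero_mul, add_zero, abs_of_nonneg (by linarith),
      abs_of_nonneg (by linarith)]
    linarith

theorem IsStepOn.exists_mem_image_integral_le (hx : MonotoneOn x (Iic n)) (hR : IsStepOn R x n)
    (ha : x 0 ≤ a) (hab : a ≤ b) (hb : b ≤ x n) (w : ℝ) :
    ∃ y ∈ (nodes x n).image R, ∫ u in a..b, |R u - y| ≤ ∫ u in a..b, |R u - w| := by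
  obtain ⟨lo, hlo, hi, hhi, θ, ⟨hθ0, hθ1⟩, hcomb⟩ := Finset.exists_convexComb_abs_sub_le
    ⟨_, Finset.mem_image_of_mem R zero_mem_nodes⟩ w
  have hint := hR.intervalIntegrable_abs_sub hx ⟨ha, hab.trans hb⟩ ⟨ha.trans hab, hb⟩
  have hmix : θ * (∫ u in a..b, |R u - lo|) + (1 - θ) * ∫ u in a..b, |R u - hi| ≤
      ∫ u in a..b, |R u - w| := by
    rw [← intervalIntegral.integral_const_mul, ← intervalIntegral.integral_const_mul,
      ← intervalIntegral.integral_add ((hint lo).const_mul θ) ((hint hi).const_mul (1 - θ))]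
    exact intervalIntegral.integral_mono_on hab (((hint lo).const_mul θ).add
      ((hint hi).const_mul (1 - θ))) (hint w) fun u hu =>
        hcomb (R u) (hR.mem_image_nodes ⟨ha.trans hu.1, hu.2.trans hb⟩)
  rcases le_total (∫ u in a..b, |R u - lo|) (∫ u in a..b, |R u - hi|) with h | h
  · exact ⟨lo, hlo, by nlinarith⟩
  · exact ⟨hi, hhi, by nlinarith⟩

theorem exists_image_nodes_stepLoss_le (hx : MonotoneOn x (Iic n)) (hR : IsStepOn R x n)
    (hs : IsWeakPartition s k (x 0) (x n)) (c : ℕ → ℝ) :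
    ∃ c', (∀ j < k, c' j ∈ (nodes x n).image R) ∧ stepLoss R k s c' ≤ stepLoss R k s c := by
  have hpiece : ∀ j, ∃ y, j < k → y ∈ (nodes x n).image R ∧
      ∫ u in s j..s (j + 1), |R u - y| ≤ ∫ u in s j..s (j + 1), |R u - c j| := by
    intro j
    by_cases hj : j < k
    · obtain ⟨y, hy, hle⟩ := hR.exists_mem_image_integral_le hx (hs.mem_Icc hj.le).1
        (hs.le_succ hj) (hs.mem_Icc hj).2 (c j)
      exact ⟨y, fun _ => ⟨hy, hle⟩⟩
    · exact ⟨0, fun h => absurd h hj⟩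
  choose c' hc' using hpiece
  exact ⟨c', fun j hj => (hc' j hj).1,
    Finset.sum_le_sum fun j hj => (hc' j (Finset.mem_range.1 hj)).2⟩

theorem exists_stepLoss_min (R : ℝ → ℝ) (A B : Finset ℝ)
    (hne : ∃ t c : ℕ → ℝ, IsWeakPartition t k a b ∧ (∀ j ≤ k, t j ∈ A) ∧ ∀ j < k, c j ∈ B) :
    ∃ t c : ℕ → ℝ, IsWeakPartition t k a b ∧ (∀ j ≤ k, t j ∈ A) ∧
      ∀ s c', IsWeakPartition s k a b → (∀ j ≤ k, s j ∈ A) → (∀ j < k, c' j ∈ B) →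
        stepLoss R k t c ≤ stepLoss R k s c' := by
  set V := {l | ∃ t c : ℕ → ℝ, (IsWeakPartition t k a b ∧ (∀ j ≤ k, t j ∈ A) ∧ ∀ j < k, c j ∈ B) ∧
    stepLoss R k t c = l}
  -- a loss only depends on `t` on `[0, k]` and on `c` on `[0, k)`
  have hV : V.Finite := by
    refine (Set.finite_range fun q : (Fin (k + 1) → A) × (Fin k → B) =>
      stepLoss R k (fun j => if h : j ≤ k then (q.1 ⟨j, Nat.lt_succ_of_le h⟩ : ℝ) else 0)
        (fun j => if h : j < k then (q.2 ⟨j, h⟩ : ℝ) else 0)).subset ?_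
    rintro _ ⟨t, c, ⟨-, htA, hcB⟩, rfl⟩
    refine ⟨(fun i => ⟨t i, htA i (Nat.lt_succ_iff.1 i.2)⟩, fun i => ⟨c i, hcB i i.2⟩),
      Finset.sum_congr rfl fun j hj => ?_⟩
    have hj := Finset.mem_range.1 hj
    simp [hj, hj.le, Nat.succ_le_of_lt hj]
  obtain ⟨t, c, htc⟩ := hne
  obtain ⟨_, ⟨t, c, ⟨ht, htA, -⟩, rfl⟩, hmin⟩ := Set.exists_min_image V id hV ⟨_, t, c, htc, rfl⟩
  exact ⟨t, c, ht, htA, fun s c' hs hsA hcB => hmin _ ⟨s, c', ⟨hs, hsA, hcB⟩, rfl⟩⟩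

theorem exists_strictMono_refinement (hx : StrictMonoOn x (Iic n)) (hkn : k ≤ n)
    (hs : IsWeakPartition s k (x 0) (x n)) (hsn : ∀ j ≤ k, s j ∈ nodes x n) :
    ∃ t : ℕ → ℝ, t 0 = x 0 ∧ t k = x n ∧ (∀ j < k, t j < t (j + 1)) ∧
      (∀ j ≤ k, t j ∈ nodes x n) ∧ ∀ j < k, ∀ l ≤ k, s l ≤ t j ∨ t (j + 1) ≤ s l := by
  classical
  have hsub : (Finset.range (k + 1)).image s ⊆ nodes x n := by
    simpa [Finset.image_subset_iff, Nat.lt_succ_iff] using hsn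
  have hcard : (nodes x n).card = n + 1 := by
    rw [nodes, Finset.card_image_of_injOn, Finset.card_range]
    exact hx.injOn.mono fun i hi => mem_Iic.2 (Nat.lt_succ_iff.1 (Finset.mem_range.1 hi))
  obtain ⟨Q, hsQ, hQ, hQcard⟩ := Finset.exists_subsuperset_card_eq hsub
    (Finset.card_image_le.trans (Finset.card_range _).le) (by omega)
  set e := Q.orderEmbOfFin hQcard
  have hsQ' : ∀ l ≤ k, ∃ m, e m = s l := fun l hl => Set.mem_range.1 <| by
    rw [Finset.range_orderEmbOfFin]
    exact hsQ (Finset.mem_image_of_mem s (Finset.mem_range.2 (Nat.lt_succ_of_le hl)))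
  have heIcc : ∀ m, e m ∈ Icc (x 0) (x n) := fun m =>
    nodes_subset_Icc hx.monotoneOn (hQ (Q.orderEmbOfFin_mem _ m))
  have hval : ∀ j ≤ k, (Fin.ofNat (k + 1) j : ℕ) = j := fun j hj => by
    rw [Fin.val_ofNat]; exact Nat.mod_eq_of_lt (by omega)
  refine ⟨fun j => e (Fin.ofNat (k + 1) j), ?_, ?_, fun j hj => ?_,
    fun j _ => hQ (Q.orderEmbOfFin_mem _ _), fun j hj l hl => ?_⟩
  · obtain ⟨m, hm⟩ := hsQ' 0 k.zero_le
    refine le_antisymm ?_ (heIcc _).1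
    rw [← hs.zero, ← hm]
    exact e.monotone (Fin.le_def.2 (by simp))
  · obtain ⟨m, hm⟩ := hsQ' k le_rfl
    refine le_antisymm (heIcc _).2 ?_
    rw [← hs.last, ← hm]
    exact e.monotone (Fin.le_def.2 (by rw [hval k le_rfl]; omega))
  · exact e.strictMono (Fin.lt_def.2 (by rw [hval j hj.le, hval (j + 1) hj]; omega))
  · obtain ⟨m, hm⟩ := hsQ' l hl
    rw [← hm]
    rcases le_or_gt (m : ℕ) j with h | h
    · exact Or.inl (e.monotone (Fin.le_def.2 (by rw [hval j hj.le]; exact h)))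
    · exact Or.inr (e.monotone (Fin.le_def.2 (by rw [hval (j + 1) hj]; omega)))

/-- Among all step functions with (at most) k pieces on [x₀,xₙ] minimizing ∫|R - M|,
there is one whose partition points lie among the original breakpoints of R. -/
theorem stmt_8 (n k : ℕ) (hk1 : 1 ≤ k) (hk : k < n) (x : ℕ → ℝ)
    (hx : ∀ i < n, x i < x (i+1))
    (R : ℝ → ℝ) (hR : IsStepOn R x n) :
    ∃ (t : ℕ → ℝ) (M : ℝ → ℝ),
      t 0 = x 0 ∧ t k = x n ∧ (∀ j < k, t j < t (j+1)) ∧ IsStepOn M t k ∧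
      (∀ j ≤ k, ∃ i ≤ n, t j = x i) ∧
      ∀ (s : ℕ → ℝ) (N : ℝ → ℝ),
        s 0 = x 0 → s k = x n → (∀ j < k, s j < s (j+1)) → IsStepOn N s k →
        (∫ u in Set.Ico (x 0) (x n), |R u - M u|) ≤
          ∫ u in Set.Ico (x 0) (x n), |R u - N u| := by
  have hx' : StrictMonoOn x (Iic n) := strictMonoOn_Iic_of_lt_succ hx
  have hxm := hx'.monotoneOn
  have hcoarse : IsWeakPartition (fun j => if j < k then x 0 else x n) k (x 0) (x n) :=
    ⟨if_pos hk1, if_neg k.lt_irrefl, monotoneOn_Iic_of_le_succ fun j _ => by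
      split_ifs <;> simp [(nodes_subset_Icc hxm zero_mem_nodes).2]⟩
  obtain ⟨t, c, ht, htn, hmin⟩ := exists_stepLoss_min R (nodes x n) ((nodes x n).image R)
    ⟨_, fun _ => R (x 0), hcoarse, fun j _ => by split_ifs; exacts [zero_mem_nodes, last_mem_nodes],
      fun _ _ => Finset.mem_image_of_mem R zero_mem_nodes⟩
  obtain ⟨t', ht'0, ht'k, ht'lt, ht'n, hsep⟩ := exists_strictMono_refinement hx' hk.le ht htn
  refine ⟨t', stepFun k t c, ht'0, ht'k, ht'lt, isStepOn_stepFun hsep,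
    fun j hj => (mem_nodes.1 (ht'n j hj)).imp fun _ h => ⟨h.1, h.2.symm⟩, ?_⟩
  intro s N hs0 hsk hs hN
  have hsw : IsWeakPartition s k (x 0) (x n) :=
    ⟨hs0, hsk, monotoneOn_Iic_of_le_succ fun j hj => (hs j hj).le⟩
  obtain ⟨s', hs', hs'n, hle₁⟩ := exists_nodes_stepLoss_le hxm hR hsw fun j => N (s j)
  obtain ⟨c', hc', hle₂⟩ := exists_image_nodes_stepLoss_le hxm hR hs' fun j => N (s j)
  rw [integral_abs_sub_eq_stepLoss hxm hR ht fun j hj u hu => ht.stepFun_eq hj hu,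
    integral_abs_sub_eq_stepLoss hxm hR hsw hN]
  exact (hmin s' c' hs' hs'n hc').trans (hle₂.trans hle₁)
end

section
/- Let C be a step function with j pieces on [x₀, xᵢ] (breakpoints in X = {x₀,…,xₙ}, values in P) minimizing ∫ |R - C| among all such functions whose last piece has value p and starts at some x_{i'} < xᵢ. Then there exists such a minimizer C whose restriction to [x₀, x_{i'}] is an optimal (j-1)-piece compression of R restricted to [x₀, x_{i'}]. -/
open MeasureTheory

/-- `(t, M)` is an admissible `j`-piece compression of the interval `[x 0, x i]`:
the breakpoints `t 0 < ⋯ < t j` lie among the points `x 0, …, x i`, start at `x 0`,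
end at `x i`, `M` is a step function on this partition, and the value of each
piece belongs to the pitch set `P`. -/
def Adm (x : ℕ → ℝ) (P : Finset ℝ) (i j : ℕ) (t : ℕ → ℝ) (M : ℝ → ℝ) : Prop :=
  t 0 = x 0 ∧ t j = x i ∧ (∀ a < j, t a < t (a+1)) ∧
  (∀ a ≤ j, ∃ l ≤ i, t a = x l) ∧ IsStepOn M t j ∧ (∀ a < j, M (t a) ∈ P)

/-- Area difference between `R` and `M` over `[x 0, x i]`. -/
noncomputable def compCost (x : ℕ → ℝ) (R M : ℝ → ℝ) (i : ℕ) : ℝ :=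
  ∫ z in Set.Ico (x 0) (x i), |R z - M z|

/-- `A*[i,j]`: optimum cost of a `j`-piece compression of `[x 0, x i]`. -/
noncomputable def Astar (x : ℕ → ℝ) (P : Finset ℝ) (R : ℝ → ℝ) (i j : ℕ) : ℝ :=
  sInf {c : ℝ | ∃ t M, Adm x P i j t M ∧ c = compCost x R M i}

/-- `A_i[j,p]`: optimum cost of a `j`-piece compression of `[x 0, x i]` whose last
piece has value `p`. -/
noncomputable def Apitch (x : ℕ → ℝ) (P : Finset ℝ) (R : ℝ → ℝ) (i j : ℕ) (p : ℝ) : ℝ :=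
  sInf {c : ℝ | ∃ t M, Adm x P i j t M ∧ M (t (j-1)) = p ∧ c = compCost x R M i}

/-! The cost of an admissible compression depends only on its breakpoint indices and its
piece values, so the set of costs is finite and a minimizer `(t, M)` with last value `p`
exists. If its last piece starts at `x i'`, any `(j-1)`-piece compression of `[x 0, x i']`
followed by the constant `p` on `[x i', x i)` is a competitor, and both costs split as the
cost on `[x 0, x i']` plus the same tail `∫ |R - p|`; minimality of `M` concludes. -/

open Set

theorem IsStepOn.comp {f : ℝ → ℝ} {s : ℕ → ℝ} {k : ℕ} (hf : IsStepOn f s k) (g : ℝ → ℝ) :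
    IsStepOn (g ∘ f) s k :=
  fun a ha u hu => congrArg g (hf a ha u hu)

theorem IsStepOn.intervalIntegrable_s13 {f : ℝ → ℝ} {s : ℕ → ℝ} {k : ℕ} (hf : IsStepOn f s k)
    (hs : ∀ a < k, s a ≤ s (a+1)) : IntervalIntegrable f volume (s 0) (s k) :=
  IntervalIntegrable.trans_iterate fun a ha =>
    (intervalIntegrable_const (c := f (s a))).congr_uIoo fun u hu =>
      (hf a ha u (Ioo_subset_Ico_self (uIoo_of_le (hs a ha) ▸ hu))).symm

theorem compCost_congr {x : ℕ → ℝ} {R M M' : ℝ → ℝ} {i : ℕ} (h : EqOn M M' (Ico (x 0) (x i))) :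
    compCost x R M i = compCost x R M' i :=
  setIntegral_congr_fun measurableSet_Ico fun z hz => by simp only [h hz]

theorem compCost_eq_add_of_eqOn {x : ℕ → ℝ} {R M : ℝ → ℝ} {i i' : ℕ} {p : ℝ}
    (hint : IntegrableOn (fun z => |R z - M z|) (Ico (x 0) (x i)))
    (h0 : x 0 ≤ x i') (hi' : x i' ≤ x i) (hM : EqOn M (fun _ => p) (Ico (x i') (x i))) :
    compCost x R M i = compCost x R M i' + ∫ z in Ico (x i') (x i), |R z - p| := by
  rw [compCost, compCost, ← Ico_union_Ico_eq_Ico h0 hi',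
    setIntegral_union Ico_disjoint_Ico_same measurableSet_Ico
      (hint.mono_set (Ico_subset_Ico_right hi')) (hint.mono_set (Ico_subset_Ico_left h0))]
  congr 1
  exact setIntegral_congr_fun measurableSet_Ico fun z hz => by simp only [hM hz]

theorem adm_self_const {x : ℕ → ℝ} {n k : ℕ} (hx : ∀ l < n, x l < x (l+1)) (hk : k ≤ n)
    {P : Finset ℝ} {p : ℝ} (hp : p ∈ P) : Adm x P k k x (fun _ => p) :=
  ⟨rfl, rfl, fun a ha => hx a (by omega), fun a ha => ⟨a, ha, rfl⟩, fun _ _ _ _ => rfl,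
    fun _ _ => hp⟩

namespace Adm

variable {x : ℕ → ℝ} {P : Finset ℝ} {i j : ℕ} {t : ℕ → ℝ} {M : ℝ → ℝ}

theorem strictMonoOn (hA : Adm x P i j t M) : StrictMonoOn t (Iic j) :=
  strictMonoOn_Iic_of_lt_succ hA.2.2.1

theorem start_le_end (hA : Adm x P i j t M) : t 0 ≤ t j :=
  hA.strictMonoOn.monotoneOn (mem_Iic.2 (Nat.zero_le j)) (mem_Iic.2 le_rfl) (Nat.zero_le j)

theorem snoc {i' k : ℕ} {p : ℝ} (hA : Adm x P i' k t M) (hi' : i' ≤ i) (hlt : x i' < x i)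
    (hp : p ∈ P) :
    Adm x P i (k+1) (Function.update t (k+1) (x i)) (fun z => if z < x i' then M z else p) := by
  have hmono := hA.strictMonoOn
  obtain ⟨h0, hk, hlt', hidx, hstep, hval⟩ := hA
  have hupd : ∀ a ≤ k, Function.update t (k+1) (x i) a = t a :=
    fun a ha => Function.update_of_ne (by omega) _ _
  have hbelow : ∀ a < k, t a < x i' :=
    fun a ha => hk ▸ hmono (mem_Iic.2 ha.le) (mem_Iic.2 le_rfl) ha
  refine ⟨by rw [hupd 0 (Nat.zero_le k), h0], Function.update_self .., fun a ha => ?_,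
    fun a ha => ?_, fun a ha u hu => ?_, fun a ha => ?_⟩
  · rcases Nat.lt_succ_iff_lt_or_eq.mp ha with ha | rfl
    · rw [hupd a ha.le, hupd (a+1) ha]; exact hlt' a ha
    · rw [hupd a le_rfl, Function.update_self, hk]; exact hlt
  · rcases Nat.le_succ_iff.mp ha with ha | rfl
    · obtain ⟨l, hl, e⟩ := hidx a ha
      exact ⟨l, hl.trans hi', by rw [hupd a ha, e]⟩
    · exact ⟨i, le_rfl, Function.update_self ..⟩
  · rcases Nat.lt_succ_iff_lt_or_eq.mp ha with ha | rfl
    · rw [hupd a ha.le, hupd (a+1) ha] at hu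
      have hu' : u < x i' :=
        hu.2.trans_le (hk ▸ hmono.monotoneOn (mem_Iic.2 ha) (mem_Iic.2 le_rfl) ha)
      simp only [hupd a ha.le, if_pos hu', if_pos (hbelow a ha)]
      exact hstep a ha u hu
    · rw [hupd a le_rfl, Function.update_self, hk] at hu
      simp only [hupd a le_rfl, hk, lt_irrefl, if_false, if_neg (not_lt.mpr hu.1)]
  · rcases Nat.lt_succ_iff_lt_or_eq.mp ha with ha | rfl
    · simp only [hupd a ha.le, if_pos (hbelow a ha)]; exact hval a ha
    · simp only [hupd a le_rfl, hk, lt_irrefl, if_false]; exact hp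

section cost

variable {n : ℕ} {R : ℝ → ℝ}

theorem intervalIntegrable_piece (hx : ∀ l < n, x l < x (l+1)) (hR : IsStepOn R x n)
    (hin : i ≤ n) (hA : Adm x P i j t M) {a : ℕ} (ha : a < j) :
    IntervalIntegrable (fun z => |R z - M z|) volume (t a) (t (a+1)) := by
  have ht := hA.strictMonoOn.monotoneOn
  have hxm := (strictMonoOn_Iic_of_lt_succ hx).monotoneOn
  obtain ⟨h0, hj, hlt, -, hstep, -⟩ := hA
  have hleft : x 0 ≤ t a := h0 ▸ ht (mem_Iic.2 (Nat.zero_le j)) (mem_Iic.2 ha.le) (Nat.zero_le a)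
  have hright : t (a+1) ≤ x n := calc
    t (a+1) ≤ t j := ht (mem_Iic.2 ha) (mem_Iic.2 le_rfl) ha
    _ = x i := hj
    _ ≤ x n := hxm (mem_Iic.2 hin) (mem_Iic.2 le_rfl) hin
  have hsub : uIcc (t a) (t (a+1)) ⊆ uIcc (x 0) (x n) := by
    rw [uIcc_of_le (hlt a ha).le, uIcc_of_le (hleft.trans ((hlt a ha).le.trans hright))]
    exact Icc_subset_Icc hleft hright
  have hconst : IntervalIntegrable (fun z => |R z - M (t a)|) volume (x 0) (x n) :=
    (hR.comp fun y => |y - M (t a)|).intervalIntegrable_s13 fun l hl => (hx l hl).le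
  refine (hconst.mono_set hsub).congr_uIoo fun u hu => ?_
  rw [uIoo_of_le (hlt a ha).le] at hu
  simp only [hstep a ha u (Ioo_subset_Ico_self hu)]

theorem integrableOn (hx : ∀ l < n, x l < x (l+1)) (hR : IsStepOn R x n) (hin : i ≤ n)
    (hA : Adm x P i j t M) : IntegrableOn (fun z => |R z - M z|) (Ico (x 0) (x i)) := by
  rw [← hA.1, ← hA.2.1, ← intervalIntegrable_iff_integrableOn_Ico_of_le hA.start_le_end]
  exact IntervalIntegrable.trans_iterate fun a ha => hA.intervalIntegrable_piece hx hR hin ha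

theorem compCost_eq_sum (hx : ∀ l < n, x l < x (l+1)) (hR : IsStepOn R x n) (hin : i ≤ n)
    (hA : Adm x P i j t M) :
    compCost x R M i = ∑ a ∈ Finset.range j, ∫ z in t a..t (a+1), |R z - M (t a)| := by
  obtain ⟨h0, hj, hlt, -, hstep, -⟩ := id hA
  rw [compCost, ← h0, ← hj, integral_Ico_eq_integral_Ioc,
    ← intervalIntegral.integral_of_le hA.start_le_end,
    ← intervalIntegral.sum_integral_adjacent_intervals (a := t) fun a ha =>
      hA.intervalIntegrable_piece hx hR hin ha]
  refine Finset.sum_congr rfl fun a ha => ?_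
  have ha : a < j := Finset.mem_range.1 ha
  exact intervalIntegral.integral_congr_Ioo_of_le (hlt a ha).le fun u hu => by
    simp only [hstep a ha u (Ioo_subset_Ico_self hu)]

end cost

end Adm

theorem finite_setOf_compCost_adm {x : ℕ → ℝ} {n : ℕ} (hx : ∀ l < n, x l < x (l+1))
    {R : ℝ → ℝ} (hR : IsStepOn R x n) (P : Finset ℝ) {i : ℕ} (hin : i ≤ n) (j : ℕ) :
    {c | ∃ t M, Adm x P i j t M ∧ c = compCost x R M i}.Finite := by
  let cost : (Fin (j+1) → ℝ) × (Fin j → ℝ) → ℝ := fun q =>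
    ∑ a : Fin j, ∫ z in q.1 a.castSucc..q.1 a.succ, |R z - q.2 a|
  have hdata : (univ.pi (fun _ => x '' Iic i) ×ˢ univ.pi (fun _ => (P : Set ℝ))).Finite :=
    (Set.Finite.pi (ι := Fin (j+1)) fun _ => (finite_Iic i).image x).prod
      (Set.Finite.pi (ι := Fin j) fun _ => P.finite_toSet)
  refine (hdata.image cost).subset ?_
  rintro _ ⟨t, M, hA, rfl⟩
  obtain ⟨-, -, -, hidx, -, hval⟩ := id hA
  refine ⟨(fun a => t a, fun a => M (t a)), ⟨fun a _ => ?_, fun a _ => hval a a.2⟩, ?_⟩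
  · obtain ⟨l, hl, e⟩ := hidx a (Nat.lt_succ_iff.mp a.2)
    exact ⟨l, hl, e.symm⟩
  · rw [hA.compCost_eq_sum hx hR hin, ← Fin.sum_univ_eq_sum_range]
    rfl

theorem stmt_13_general (n : ℕ) (x : ℕ → ℝ) (hx : ∀ i < n, x i < x (i+1))
    (P : Finset ℝ) (R : ℝ → ℝ)
    (hR : IsStepOn R x n)
    (i j : ℕ) (hj : 2 ≤ j) (hji : j ≤ i) (hin : i ≤ n)
    (p : ℝ) (hp : p ∈ P) :
    ∃ t M, Adm x P i j t M ∧ M (t (j-1)) = p ∧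
      (∀ t' M', Adm x P i j t' M' → M' (t' (j-1)) = p →
        compCost x R M i ≤ compCost x R M' i) ∧
      (∀ i' : ℕ, t (j-1) = x i' → i' ≤ i →
        ∀ t'' M'', Adm x P i' (j-1) t'' M'' →
          compCost x R M i' ≤ compCost x R M'' i') := by
  obtain ⟨k, rfl⟩ : ∃ k, j = k + 1 := ⟨j - 1, by omega⟩
  simp only [Nat.add_sub_cancel]
  set D := {c | ∃ t M, Adm x P i (k+1) t M ∧ M (t k) = p ∧ c = compCost x R M i}
  have hfin : D.Finite := (finite_setOf_compCost_adm hx hR P hin (k+1)).subset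
    fun c ⟨t, M, hA, _, hc⟩ => ⟨t, M, hA, hc⟩
  have hki : x k < x i :=
    strictMonoOn_Iic_of_lt_succ hx (mem_Iic.2 (by omega)) (mem_Iic.2 hin) (by omega)
  have hne : D.Nonempty :=
    ⟨_, _, _, (adm_self_const hx (by omega) hp).snoc (by omega) hki hp, by simp, rfl⟩
  obtain ⟨_, ⟨t, M, hA, hlast, rfl⟩, hmin⟩ := exists_min_image D (fun c => c) hfin hne
  refine ⟨t, M, hA, hlast, fun t' M' hA' hlast' => hmin _ ⟨t', M', hA', hlast', rfl⟩, ?_⟩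
  intro i' hti' hi' t'' M'' hA''
  obtain ⟨-, htk, htlt, -, htstep, -⟩ := id hA
  have hlt : x i' < x i := hti' ▸ htk ▸ htlt k k.lt_succ_self
  have h0 : x 0 ≤ x i' := hA''.1 ▸ hA''.2.1 ▸ hA''.start_le_end
  have hglued := hA''.snoc hi' hlt hp
  have hsplit := compCost_eq_add_of_eqOn (hA.integrableOn hx hR hin) h0 hlt.le (p := p)
    fun z hz => (htstep k k.lt_succ_self z (hti' ▸ htk ▸ hz)).trans hlast
  have hsplit' := compCost_eq_add_of_eqOn (hglued.integrableOn hx hR hin) h0 hlt.le (p := p)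
    fun z hz => if_neg (not_lt.mpr hz.1)
  rw [compCost_congr (M' := M'') fun z hz => if_pos hz.2] at hsplit'
  linarith [hmin _ ⟨_, _, hglued, by simp [hA''.2.1], rfl⟩]

/-- Optimal substructure: there is a minimizer among the j-piece compressions of
`[x 0, x i]` whose last piece has value `p`, whose restriction to `[x 0, x_{i'}]`
(where `x_{i'}` is the start of its last piece) is an optimal (j-1)-piece
compression of `R` restricted to `[x 0, x_{i'}]`. -/
theorem stmt_13 (n : ℕ) (x : ℕ → ℝ) (hx : ∀ i < n, x i < x (i+1))
    (P : Finset ℝ) (hP : P.Nonempty) (R : ℝ → ℝ)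
    (hR : IsStepOn R x n) (hRP : ∀ l < n, R (x l) ∈ P)
    (i j : ℕ) (hj : 2 ≤ j) (hji : j ≤ i) (hin : i ≤ n)
    (p : ℝ) (hp : p ∈ P) :
    ∃ t M, Adm x P i j t M ∧ M (t (j-1)) = p ∧
      (∀ t' M', Adm x P i j t' M' → M' (t' (j-1)) = p →
        compCost x R M i ≤ compCost x R M' i) ∧
      (∀ i' : ℕ, t (j-1) = x i' → i' ≤ i →
        ∀ t'' M'', Adm x P i' (j-1) t'' M'' →
          compCost x R M i' ≤ compCost x R M'' i') :=
  stmt_13_general n x hx P R hR i j hj hji hin p hp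
end
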